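/- Let K ⊆ P(ℝ). The following are equivalent: (i) K is tight, i.e. sup_{μ∈K} μ([−s,s]ᶜ) → 0 as s → ∞; (ii) K is ≤st-bounded, i.e. there exist μ̲, μ̄ ∈ P(ℝ) with μ̲ ≤st μ ≤st μ̄ for all μ ∈ K; (iii) every nonempty subset of K has a least upper bound and a greatest lower bound in (P(ℝ), ≤st); (iv) there exists a nondecreasing function ψ : [0,∞) → [0,∞) with ψ(0) = 0, ψ(s) → ∞ as s → ∞ and sup_{μ∈K} ∫_ℝ ψ(|x|) dμ(x) < ∞. -/

import Mathlib

open MeasureTheory Filter Set Topology NNReal ENNReal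

/-- First order stochastic dominance on `P(ℝ)`. -/
def StOrd (μ ν : ProbabilityMeasure ℝ) : Prop :=
  ∀ s : ℝ, (μ : Measure ℝ) (Ioi s) ≤ (ν : Measure ℝ) (Ioi s)

/-!
Everything is read off distribution functions: `μ ≤st ν` iff `F_ν ≤ F_μ`. The pointwise infimum
(supremum) of the distribution functions of a family is monotone, and its right-continuous
regularization is the distribution function of the least upper (greatest lower) bound as soon as
it tends to `1` at `+∞` (to `0` at `-∞`); uniformly small tails are exactly what guarantees this.
Conversely, `μ̲ ≤st μ ≤st μ̄` bounds the tails of `μ` by those of `μ̲` and `μ̄`.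
For (iv), pick thresholds `t n ≥ n` with `sup_K μ([-t n, t n]ᶜ) ≤ 2⁻ⁿ` and let `ψ s` count the
thresholds below `s`: then `∫ ψ(|x|) dμ = ∑ μ([-t n, t n]ᶜ) ≤ 2`. In the other direction Markov's
inequality gives `sup_K μ([-s, s]ᶜ) ≤ C / ψ s`.
-/

open ProbabilityTheory

lemma measure_Ioi_le_measure_Ioi_iff {μ ν : Measure ℝ} [IsProbabilityMeasure μ]
    [IsProbabilityMeasure ν] (s : ℝ) : μ (Ioi s) ≤ ν (Ioi s) ↔ ν (Iic s) ≤ μ (Iic s) := by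
  rw [← compl_Iic, prob_compl_eq_one_sub measurableSet_Iic,
    prob_compl_eq_one_sub measurableSet_Iic, ENNReal.sub_le_sub_iff_left prob_le_one one_ne_top]

lemma stOrd_iff_measure_Iic_le {μ ν : ProbabilityMeasure ℝ} :
    StOrd μ ν ↔ ∀ s, (ν : Measure ℝ) (Iic s) ≤ (μ : Measure ℝ) (Iic s) :=
  forall_congr' measure_Ioi_le_measure_Ioi_iff

lemma stOrd_iff_cdf_le {μ ν : ProbabilityMeasure ℝ} :
    StOrd μ ν ↔ ∀ s, cdf (ν : Measure ℝ) s ≤ cdf (μ : Measure ℝ) s := by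
  simp_rw [stOrd_iff_measure_Iic_le, ← ofReal_cdf, ENNReal.ofReal_le_ofReal_iff (cdf_nonneg _ _)]

lemma tendsto_measure_Iic_atBot (μ : Measure ℝ) [IsProbabilityMeasure μ] :
    Tendsto (fun s => μ (Iic s)) atBot (𝓝 0) := by
  simpa [ofReal_cdf] using ENNReal.tendsto_ofReal (tendsto_cdf_atBot μ)

lemma tendsto_measure_Ioi_atTop (μ : Measure ℝ) [IsProbabilityMeasure μ] :
    Tendsto (fun s => μ (Ioi s)) atTop (𝓝 0) := by
  simp_rw [← compl_Iic, prob_compl_eq_one_sub measurableSet_Iic]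
  simpa using ENNReal.Tendsto.sub tendsto_const_nhds (tendsto_measure_Iic_atTop μ)
    (Or.inl one_ne_top)

namespace Monotone

variable {f : ℝ → ℝ}

lemma tendsto_stieltjesFunction_atTop (hf : Monotone f) {l : ℝ} (h : Tendsto f atTop (𝓝 l)) :
    Tendsto hf.stieltjesFunction atTop (𝓝 l) :=
  tendsto_of_tendsto_of_tendsto_of_le_of_le h
    (h.comp (tendsto_atTop_add_const_right _ 1 tendsto_id))
    (fun _ => hf.le_rightLim le_rfl) (fun x => hf.rightLim_le (lt_add_one x))

lemma tendsto_stieltjesFunction_atBot (hf : Monotone f) {l : ℝ} (h : Tendsto f atBot (𝓝 l)) :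
    Tendsto hf.stieltjesFunction atBot (𝓝 l) :=
  tendsto_of_tendsto_of_tendsto_of_le_of_le h
    (h.comp (tendsto_atBot_add_const_right _ 1 tendsto_id))
    (fun _ => hf.le_rightLim le_rfl) (fun x => hf.rightLim_le (lt_add_one x))

lemma rightLim_le_of_le (hf : Monotone f) {F : StieltjesFunction ℝ} (hfF : ∀ x, f x ≤ F x)
    (x : ℝ) : Function.rightLim f x ≤ F x :=
  le_of_tendsto_of_tendsto' (hf.tendsto_rightLim x)
    ((F.right_continuous x).mono Ioi_subset_Ici_self) hfF

noncomputable def probabilityMeasure (hf : Monotone f) (hbot : Tendsto f atBot (𝓝 0))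
    (htop : Tendsto f atTop (𝓝 1)) : ProbabilityMeasure ℝ :=
  ⟨hf.stieltjesFunction.measure, hf.stieltjesFunction.isProbabilityMeasure
    (hf.tendsto_stieltjesFunction_atBot hbot) (hf.tendsto_stieltjesFunction_atTop htop)⟩

variable (hf : Monotone f) {hbot : Tendsto f atBot (𝓝 0)} {htop : Tendsto f atTop (𝓝 1)}

lemma cdf_probabilityMeasure :
    cdf (hf.probabilityMeasure hbot htop : Measure ℝ) = hf.stieltjesFunction :=
  cdf_measure_stieltjesFunction _ (hf.tendsto_stieltjesFunction_atBot hbot)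
    (hf.tendsto_stieltjesFunction_atTop htop)

lemma le_cdf_probabilityMeasure (x : ℝ) :
    f x ≤ cdf (hf.probabilityMeasure hbot htop : Measure ℝ) x := by
  rw [cdf_probabilityMeasure]
  exact hf.le_rightLim le_rfl

lemma cdf_probabilityMeasure_le {F : StieltjesFunction ℝ} (hfF : ∀ x, f x ≤ F x) (x : ℝ) :
    cdf (hf.probabilityMeasure hbot htop : Measure ℝ) x ≤ F x := by
  rw [cdf_probabilityMeasure]
  exact hf.rightLim_le_of_le hfF x

end Monotone

def IsStLUB (A : Set (ProbabilityMeasure ℝ)) (σ : ProbabilityMeasure ℝ) : Prop :=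
  (∀ μ ∈ A, StOrd μ σ) ∧ ∀ b, (∀ μ ∈ A, StOrd μ b) → StOrd σ b

def IsStGLB (A : Set (ProbabilityMeasure ℝ)) (τ : ProbabilityMeasure ℝ) : Prop :=
  (∀ μ ∈ A, StOrd τ μ) ∧ ∀ b, (∀ μ ∈ A, StOrd b μ) → StOrd b τ

section Envelopes

variable {A : Set (ProbabilityMeasure ℝ)}

noncomputable def cdfInf (A : Set (ProbabilityMeasure ℝ)) (x : ℝ) : ℝ :=
  ⨅ μ : A, cdf ((μ : ProbabilityMeasure ℝ) : Measure ℝ) x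

noncomputable def cdfSup (A : Set (ProbabilityMeasure ℝ)) (x : ℝ) : ℝ :=
  ⨆ μ : A, cdf ((μ : ProbabilityMeasure ℝ) : Measure ℝ) x

lemma cdfInf_le_cdf {μ : ProbabilityMeasure ℝ} (hμ : μ ∈ A) (x : ℝ) :
    cdfInf A x ≤ cdf (μ : Measure ℝ) x :=
  ciInf_le (f := fun ν : A => cdf ((ν : ProbabilityMeasure ℝ) : Measure ℝ) x)
    ⟨0, forall_mem_range.2 fun _ => cdf_nonneg _ x⟩ ⟨μ, hμ⟩

lemma cdf_le_cdfSup {μ : ProbabilityMeasure ℝ} (hμ : μ ∈ A) (x : ℝ) :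
    cdf (μ : Measure ℝ) x ≤ cdfSup A x :=
  le_ciSup (f := fun ν : A => cdf ((ν : ProbabilityMeasure ℝ) : Measure ℝ) x)
    ⟨1, forall_mem_range.2 fun _ => cdf_le_one _ x⟩ ⟨μ, hμ⟩

lemma le_cdfInf (hA : A.Nonempty) {c x : ℝ} (h : ∀ μ ∈ A, c ≤ cdf (μ : Measure ℝ) x) :
    c ≤ cdfInf A x :=
  have := hA.to_subtype
  le_ciInf fun μ => h μ μ.2

lemma cdfSup_le (hA : A.Nonempty) {c x : ℝ} (h : ∀ μ ∈ A, cdf (μ : Measure ℝ) x ≤ c) :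
    cdfSup A x ≤ c :=
  have := hA.to_subtype
  ciSup_le fun μ => h μ μ.2

lemma monotone_cdfInf (hA : A.Nonempty) : Monotone (cdfInf A) := fun _ _ hxy =>
  le_cdfInf hA fun _ hμ => (cdfInf_le_cdf hμ _).trans (monotone_cdf _ hxy)

lemma monotone_cdfSup (hA : A.Nonempty) : Monotone (cdfSup A) := fun _ _ hxy =>
  cdfSup_le hA fun _ hμ => (monotone_cdf _ hxy).trans (cdf_le_cdfSup hμ _)

lemma tendsto_cdfInf_atBot (hA : A.Nonempty) : Tendsto (cdfInf A) atBot (𝓝 0) :=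
  tendsto_of_tendsto_of_tendsto_of_le_of_le tendsto_const_nhds
    (tendsto_cdf_atBot (hA.some : Measure ℝ)) (fun _ => le_cdfInf hA fun _ _ => cdf_nonneg _ _)
    (cdfInf_le_cdf hA.some_mem)

lemma tendsto_cdfSup_atTop (hA : A.Nonempty) : Tendsto (cdfSup A) atTop (𝓝 1) :=
  tendsto_of_tendsto_of_tendsto_of_le_of_le (tendsto_cdf_atTop (hA.some : Measure ℝ))
    tendsto_const_nhds (cdf_le_cdfSup hA.some_mem)
    (fun _ => cdfSup_le hA fun _ _ => cdf_le_one _ _)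

theorem exists_isStLUB (hA : A.Nonempty) (htop : Tendsto (cdfInf A) atTop (𝓝 1)) :
    ∃ σ, IsStLUB A σ := by
  set σ := (monotone_cdfInf hA).probabilityMeasure (tendsto_cdfInf_atBot hA) htop
  refine ⟨σ, fun μ hμ => ?_, fun b hb => ?_⟩ <;> rw [stOrd_iff_cdf_le]
  · exact (monotone_cdfInf hA).cdf_probabilityMeasure_le (cdfInf_le_cdf hμ)
  · exact fun x => (le_cdfInf hA fun μ hμ => stOrd_iff_cdf_le.1 (hb μ hμ) x).trans
      ((monotone_cdfInf hA).le_cdf_probabilityMeasure x)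

theorem exists_isStGLB (hA : A.Nonempty) (hbot : Tendsto (cdfSup A) atBot (𝓝 0)) :
    ∃ τ, IsStGLB A τ := by
  set τ := (monotone_cdfSup hA).probabilityMeasure hbot (tendsto_cdfSup_atTop hA)
  refine ⟨τ, fun μ hμ => ?_, fun b hb => ?_⟩ <;> rw [stOrd_iff_cdf_le]
  · exact fun x => (cdf_le_cdfSup hμ x).trans ((monotone_cdfSup hA).le_cdf_probabilityMeasure x)
  · exact (monotone_cdfSup hA).cdf_probabilityMeasure_le
      fun x => cdfSup_le hA fun μ hμ => stOrd_iff_cdf_le.1 (hb μ hμ) x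

end Envelopes

section Tails

noncomputable def tailSup (K : Set (ProbabilityMeasure ℝ)) (s : ℝ) : ℝ≥0∞ :=
  ⨆ μ ∈ K, (μ : Measure ℝ) (Icc (-s) s)ᶜ

variable {K A : Set (ProbabilityMeasure ℝ)}

lemma measure_compl_Icc_le_tailSup {μ : ProbabilityMeasure ℝ} (hμ : μ ∈ K) (s : ℝ) :
    (μ : Measure ℝ) (Icc (-s) s)ᶜ ≤ tailSup K s :=
  le_iSup₂ (f := fun (ν : ProbabilityMeasure ℝ) (_ : ν ∈ K) => (ν : Measure ℝ) (Icc (-s) s)ᶜ)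
    μ hμ

lemma tailSup_mono (hAK : A ⊆ K) (s : ℝ) : tailSup A s ≤ tailSup K s :=
  biSup_mono fun _ hμ => hAK hμ

lemma tailSup_ne_top (s : ℝ) : tailSup K s ≠ ⊤ :=
  ne_top_of_le_ne_top one_ne_top (iSup₂_le fun _ _ => prob_le_one)

lemma measureReal_compl_Icc_le_tailSup {μ : ProbabilityMeasure ℝ} (hμ : μ ∈ K) (s : ℝ) :
    (μ : Measure ℝ).real (Icc (-s) s)ᶜ ≤ (tailSup K s).toReal :=
  ENNReal.toReal_mono (tailSup_ne_top s) (measure_compl_Icc_le_tailSup hμ s)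

lemma one_sub_tailSup_le_cdfInf (hA : A.Nonempty) (s : ℝ) :
    1 - (tailSup A s).toReal ≤ cdfInf A s :=
  le_cdfInf hA fun μ hμ => calc
    1 - (tailSup A s).toReal ≤ 1 - (μ : Measure ℝ).real (Icc (-s) s)ᶜ := by
      gcongr; exact measureReal_compl_Icc_le_tailSup hμ s
    _ = (μ : Measure ℝ).real (Icc (-s) s) := by
      rw [probReal_compl_eq_one_sub measurableSet_Icc]; ring
    _ ≤ cdf (μ : Measure ℝ) s := by
      rw [cdf_eq_real]; exact measureReal_mono Icc_subset_Iic_self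

lemma cdfSup_le_tailSup (hA : A.Nonempty) (s : ℝ) : cdfSup A s ≤ (tailSup A (-s - 1)).toReal :=
  cdfSup_le hA fun μ hμ => by
    refine (cdf_eq_real _ s).trans_le
      ((measureReal_mono fun x hx hx' => ?_).trans (measureReal_compl_Icc_le_tailSup hμ _))
    linarith [hx'.1, mem_Iic.1 hx]

lemma tendsto_cdfInf_atTop (hA : A.Nonempty) (h : Tendsto (tailSup A) atTop (𝓝 0)) :
    Tendsto (cdfInf A) atTop (𝓝 1) := by
  have h' : Tendsto (fun s => 1 - (tailSup A s).toReal) atTop (𝓝 1) := by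
    simpa using tendsto_const_nhds.sub ((ENNReal.tendsto_toReal zero_ne_top).comp h)
  exact tendsto_of_tendsto_of_tendsto_of_le_of_le h' tendsto_const_nhds
    (one_sub_tailSup_le_cdfInf hA) fun s => (cdfInf_le_cdf hA.some_mem s).trans (cdf_le_one _ s)

lemma tendsto_cdfSup_atBot (hA : A.Nonempty) (h : Tendsto (tailSup A) atTop (𝓝 0)) :
    Tendsto (cdfSup A) atBot (𝓝 0) := by
  have h' : Tendsto (fun s => (tailSup A (-s - 1)).toReal) atBot (𝓝 0) := by
    have hs : Tendsto (fun s : ℝ => -s - 1) atBot atTop := by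
      simpa only [sub_eq_add_neg] using
        tendsto_atTop_add_const_right _ (-1) tendsto_neg_atBot_atTop
    simpa [Function.comp_def] using ((ENNReal.tendsto_toReal zero_ne_top).comp h).comp hs
  exact tendsto_of_tendsto_of_tendsto_of_le_of_le tendsto_const_nhds h'
    (fun s => (cdf_nonneg _ s).trans (cdf_le_cdfSup hA.some_mem s)) (cdfSup_le_tailSup hA)

lemma tailSup_le_of_stOrd {μlow μup : ProbabilityMeasure ℝ}
    (hb : ∀ μ ∈ K, StOrd μlow μ ∧ StOrd μ μup) (s : ℝ) :
    tailSup K s ≤ (μlow : Measure ℝ) (Iic (-s)) + (μup : Measure ℝ) (Ioi s) :=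
  iSup₂_le fun μ hμ => calc
    (μ : Measure ℝ) (Icc (-s) s)ᶜ ≤ (μ : Measure ℝ) (Iic (-s) ∪ Ioi s) :=
      measure_mono fun x hx => by
        simp only [mem_compl_iff, mem_Icc, not_and_or, not_le] at hx
        exact hx.imp le_of_lt id
    _ ≤ (μ : Measure ℝ) (Iic (-s)) + (μ : Measure ℝ) (Ioi s) := measure_union_le _ _
    _ ≤ _ := add_le_add (stOrd_iff_measure_Iic_le.1 (hb μ hμ).1 _) ((hb μ hμ).2 s)

theorem tendsto_tailSup_of_stOrd {μlow μup : ProbabilityMeasure ℝ}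
    (hb : ∀ μ ∈ K, StOrd μlow μ ∧ StOrd μ μup) : Tendsto (tailSup K) atTop (𝓝 0) := by
  have h := ((tendsto_measure_Iic_atBot (μlow : Measure ℝ)).comp tendsto_neg_atTop_atBot).add
    (tendsto_measure_Ioi_atTop (μup : Measure ℝ))
  rw [add_zero] at h
  exact tendsto_of_tendsto_of_tendsto_of_le_of_le tendsto_const_nhds h (fun _ => zero_le)
    (tailSup_le_of_stOrd hb)

end Tails

lemma lt_nnnorm_iff_mem_compl_Icc (r : ℝ≥0) (x : ℝ) :
    r < ‖x‖₊ ↔ x ∈ (Icc (-(r : ℝ)) r)ᶜ := by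
  rw [mem_compl_iff, mem_Icc, ← abs_le, not_le, ← NNReal.coe_lt_coe, coe_nnnorm,
    Real.norm_eq_abs]

section ThresholdCount

noncomputable def thresholdCount (t : ℕ → ℝ≥0) (s : ℝ≥0) : ℝ≥0 := {n | t n < s}.ncard

variable {t : ℕ → ℝ≥0}

lemma finite_setOf_lt_of_natCast_le (ht : ∀ n : ℕ, (n : ℝ≥0) ≤ t n) (s : ℝ≥0) :
    {n | t n < s}.Finite :=
  (finite_Iio ⌈s⌉₊).subset fun n hn => Nat.lt_ceil.2 ((ht n).trans_lt hn)

lemma thresholdCount_zero : thresholdCount t 0 = 0 := by simp [thresholdCount]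

lemma monotone_thresholdCount (ht : ∀ n : ℕ, (n : ℝ≥0) ≤ t n) : Monotone (thresholdCount t) :=
  fun _ b hab => Nat.cast_le.2 <|
    ncard_le_ncard (fun _ hn => lt_of_lt_of_le hn hab) (finite_setOf_lt_of_natCast_le ht b)

lemma tendsto_thresholdCount_atTop (ht : ∀ n : ℕ, (n : ℝ≥0) ≤ t n) :
    Tendsto (thresholdCount t) atTop atTop := by
  refine tendsto_natCast_atTop_atTop.comp (tendsto_atTop.2 fun N => ?_)
  filter_upwards [eventually_gt_atTop ((Finset.range N).sup t)] with s hs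
  calc N = (Finset.range N : Set ℕ).ncard := by simp
    _ ≤ {n | t n < s}.ncard := ncard_le_ncard (fun n hn => (Finset.le_sup hn).trans_lt hs)
      (finite_setOf_lt_of_natCast_le ht s)

lemma coe_thresholdCount (ht : ∀ n : ℕ, (n : ℝ≥0) ≤ t n) (s : ℝ≥0) :
    (thresholdCount t s : ℝ≥0∞) = ∑' n, {n | t n < s}.indicator 1 n := by
  rw [← tsum_subtype]
  simp only [Pi.one_apply]
  rw [ENNReal.tsum_set_one, ← (finite_setOf_lt_of_natCast_le ht s).cast_ncard_eq]
  simp [thresholdCount]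

lemma lintegral_thresholdCount (ht : ∀ n : ℕ, (n : ℝ≥0) ≤ t n) (μ : Measure ℝ) :
    ∫⁻ x, thresholdCount t ‖x‖₊ ∂μ = ∑' n, μ (Icc (-(t n : ℝ)) (t n))ᶜ := by
  have hsum (x : ℝ) : (thresholdCount t ‖x‖₊ : ℝ≥0∞) =
      ∑' n, (Icc (-(t n : ℝ)) (t n))ᶜ.indicator 1 x := by
    simp only [coe_thresholdCount ht, indicator_apply, mem_ofPred_eq,
      lt_nnnorm_iff_mem_compl_Icc, Pi.one_apply]
  simp_rw [hsum]
  rw [lintegral_tsum fun n => (measurable_one.indicator measurableSet_Icc.compl).aemeasurable]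
  simp_rw [lintegral_indicator_one measurableSet_Icc.compl]

end ThresholdCount

section Moments

variable {K : Set (ProbabilityMeasure ℝ)}

lemma exists_thresholds_of_tight (h : Tendsto (tailSup K) atTop (𝓝 0)) :
    ∃ t : ℕ → ℝ≥0, ∀ n : ℕ, (n : ℝ≥0) ≤ t n ∧ tailSup K (t n) ≤ 2⁻¹ ^ n := by
  have h' : Tendsto (fun s : ℝ≥0 => tailSup K s) atTop (𝓝 0) :=
    h.comp (NNReal.tendsto_coe_atTop.2 tendsto_id)
  have hpos (n : ℕ) : (0 : ℝ≥0∞) < 2⁻¹ ^ n := ENNReal.pow_pos (by simp) n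
  choose t ht using fun n : ℕ =>
    ((eventually_ge_atTop (n : ℝ≥0)).and (h'.eventually (ge_mem_nhds (hpos n)))).exists
  exact ⟨t, ht⟩

theorem exists_lintegral_bound_of_tight (h : Tendsto (tailSup K) atTop (𝓝 0)) :
    ∃ ψ : ℝ≥0 → ℝ≥0, Monotone ψ ∧ ψ 0 = 0 ∧ Tendsto ψ atTop atTop ∧
      (⨆ μ ∈ K, ∫⁻ x, (ψ ‖x‖₊ : ℝ≥0∞) ∂(μ : Measure ℝ)) < ⊤ := by
  obtain ⟨t, ht⟩ := exists_thresholds_of_tight h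
  have ht_ge (n : ℕ) : (n : ℝ≥0) ≤ t n := (ht n).1
  refine ⟨thresholdCount t, monotone_thresholdCount ht_ge, thresholdCount_zero,
    tendsto_thresholdCount_atTop ht_ge, ?_⟩
  calc ⨆ μ ∈ K, ∫⁻ x, (thresholdCount t ‖x‖₊ : ℝ≥0∞) ∂(μ : Measure ℝ)
      ≤ ∑' n : ℕ, 2⁻¹ ^ n := iSup₂_le fun μ hμ => by
        rw [lintegral_thresholdCount ht_ge]
        exact ENNReal.tsum_le_tsum fun n => (measure_compl_Icc_le_tailSup hμ _).trans (ht n).2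
    _ < ⊤ := by simp [ENNReal.tsum_geometric, ENNReal.one_sub_inv_two]

lemma measure_compl_Icc_le_lintegral_div {ψ : ℝ≥0 → ℝ≥0} (hψ : Monotone ψ) (μ : Measure ℝ)
    {s : ℝ≥0} (hs : ψ s ≠ 0) :
    μ (Icc (-(s : ℝ)) s)ᶜ ≤ (∫⁻ x, (ψ ‖x‖₊ : ℝ≥0∞) ∂μ) / ψ s :=
  (measure_mono fun x hx => ENNReal.coe_le_coe.2
      (hψ ((lt_nnnorm_iff_mem_compl_Icc s x).2 hx).le)).trans
    (meas_ge_le_lintegral_div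
      (hψ.measurable.comp measurable_nnnorm).coe_nnreal_ennreal.aemeasurable
      (ENNReal.coe_ne_zero.2 hs) coe_ne_top)

theorem tendsto_tailSup_of_lintegral_bound {ψ : ℝ≥0 → ℝ≥0} (hψ : Monotone ψ)
    (htop : Tendsto ψ atTop atTop)
    (hC : (⨆ μ ∈ K, ∫⁻ x, (ψ ‖x‖₊ : ℝ≥0∞) ∂(μ : Measure ℝ)) < ⊤) :
    Tendsto (tailSup K) atTop (𝓝 0) := by
  set C := ⨆ μ ∈ K, ∫⁻ x, (ψ ‖x‖₊ : ℝ≥0∞) ∂(μ : Measure ℝ)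
  have hψ' : Tendsto (fun s : ℝ => ψ s.toNNReal) atTop atTop :=
    htop.comp tendsto_real_toNNReal_atTop
  have hdiv : Tendsto (fun s : ℝ => C / ψ s.toNNReal) atTop (𝓝 0) := by
    simpa using ENNReal.Tendsto.const_div (ENNReal.tendsto_coe_nhds_top.2 hψ') (Or.inr hC.ne)
  refine tendsto_of_tendsto_of_tendsto_of_le_of_le' tendsto_const_nhds hdiv
    (.of_forall fun _ => zero_le) ?_
  filter_upwards [eventually_ge_atTop 0, hψ'.eventually_ne_atTop 0] with s hs0 hs
  refine iSup₂_le fun μ hμ => ?_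
  have := measure_compl_Icc_le_lintegral_div hψ μ hs
  rw [Real.coe_toNNReal _ hs0] at this
  exact this.trans (ENNReal.div_le_div_right
    (le_iSup₂ (f := fun (ν : ProbabilityMeasure ℝ) (_ : ν ∈ K) =>
      ∫⁻ x, (ψ ‖x‖₊ : ℝ≥0∞) ∂(ν : Measure ℝ)) μ hμ) _)

end Moments

theorem exists_isStLUB_isStGLB_of_subset {K A : Set (ProbabilityMeasure ℝ)}
    (hK : Tendsto (tailSup K) atTop (𝓝 0)) (hAK : A ⊆ K) (hA : A.Nonempty) :
    (∃ σ, IsStLUB A σ) ∧ ∃ τ, IsStGLB A τ :=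
  have hA_tight : Tendsto (tailSup A) atTop (𝓝 0) := tendsto_of_tendsto_of_tendsto_of_le_of_le
    tendsto_const_nhds hK (fun _ => zero_le) (tailSup_mono hAK)
  ⟨exists_isStLUB hA (tendsto_cdfInf_atTop hA hA_tight),
    exists_isStGLB hA (tendsto_cdfSup_atBot hA hA_tight)⟩

theorem exists_stOrd_bounds_of_isStLUB_isStGLB {K : Set (ProbabilityMeasure ℝ)}
    (h : K.Nonempty → (∃ σ, IsStLUB K σ) ∧ ∃ τ, IsStGLB K τ) :
    ∃ μlow μup : ProbabilityMeasure ℝ, ∀ μ ∈ K, StOrd μlow μ ∧ StOrd μ μup := by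
  rcases K.eq_empty_or_nonempty with rfl | hK
  · exact ⟨default, default, by simp⟩
  · obtain ⟨⟨σ, hσ, -⟩, τ, hτ, -⟩ := h hK
    exact ⟨τ, σ, fun μ hμ => ⟨hτ μ hμ, hσ μ hμ⟩⟩

/-- **Statement 10.** For `K ⊆ P(ℝ)` the following are equivalent: (i) `K` is tight; (ii) `K`
is `≤st`-bounded; (iii) every nonempty subset of `K` has a least upper bound and a greatest
lower bound in `(P(ℝ), ≤st)`; (iv) there is a nondecreasing `ψ : [0,∞) → [0,∞)` with
`ψ(0) = 0`, `ψ(s) → ∞` and `sup_{μ∈K} ∫ ψ(|x|) dμ(x) < ∞`. -/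
theorem stmt_10 (K : Set (ProbabilityMeasure ℝ)) :
    (Tendsto (fun s : ℝ => ⨆ μ ∈ K, (μ : Measure ℝ) ((Icc (-s) s)ᶜ)) atTop (𝓝 0) ↔
      ∃ μlow μup : ProbabilityMeasure ℝ, ∀ μ ∈ K, StOrd μlow μ ∧ StOrd μ μup) ∧
    (Tendsto (fun s : ℝ => ⨆ μ ∈ K, (μ : Measure ℝ) ((Icc (-s) s)ᶜ)) atTop (𝓝 0) ↔
      ∀ A ⊆ K, A.Nonempty →
        (∃ σ : ProbabilityMeasure ℝ, (∀ μ ∈ A, StOrd μ σ) ∧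
          (∀ b, (∀ μ ∈ A, StOrd μ b) → StOrd σ b)) ∧
        (∃ τ : ProbabilityMeasure ℝ, (∀ μ ∈ A, StOrd τ μ) ∧
          (∀ b, (∀ μ ∈ A, StOrd b μ) → StOrd b τ))) ∧
    (Tendsto (fun s : ℝ => ⨆ μ ∈ K, (μ : Measure ℝ) ((Icc (-s) s)ᶜ)) atTop (𝓝 0) ↔
      ∃ ψ : ℝ≥0 → ℝ≥0, Monotone ψ ∧ ψ 0 = 0 ∧ Tendsto ψ atTop atTop ∧
        (⨆ μ ∈ K, ∫⁻ x, (ψ ‖x‖₊ : ℝ≥0∞) ∂(μ : Measure ℝ)) < ⊤) := by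
  have lattice_of_tight (h : Tendsto (tailSup K) atTop (𝓝 0)) (A) (hAK : A ⊆ K)
      (hA : A.Nonempty) : (∃ σ, IsStLUB A σ) ∧ ∃ τ, IsStGLB A τ :=
    exists_isStLUB_isStGLB_of_subset h hAK hA
  have bounded_of_lattice
      (h : ∀ A ⊆ K, A.Nonempty → (∃ σ, IsStLUB A σ) ∧ ∃ τ, IsStGLB A τ) :=
    exists_stOrd_bounds_of_isStLUB_isStGLB fun hK => h K subset_rfl hK
  refine ⟨⟨fun h => bounded_of_lattice (lattice_of_tight h),
      fun ⟨_, _, hb⟩ => tendsto_tailSup_of_stOrd hb⟩,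
    ⟨lattice_of_tight, fun h => ?_⟩,
    ⟨exists_lintegral_bound_of_tight,
      fun ⟨_, hψ, _, htop, hC⟩ => tendsto_tailSup_of_lintegral_bound hψ htop hC⟩⟩
  obtain ⟨_, _, hb⟩ := bounded_of_lattice h
  exact tendsto_tailSup_of_stOrd hb
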